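/- arXiv:2410.01826 — 2 statements merged into one kernel-verified Lean document; each statement's English description precedes it below -/
import Mathlib

section
/- Let p ≥ 1, q ∈ [0,1], and let s, σ, θ̂ : Fin p × Fin p → ℝ. Suppose there are constants ς > 0, M > 0 and θ₁ ≥ θ₂ > 0 such that: (a) |s_{ij} − σ_{ij}| ≤ Mς for all i, j; (b) θ₂ ≤ √θ̂_{ij} ≤ θ₁ for all i, j. Set C = 2M/θ₂ and τ_{ij} = Cς√θ̂_{ij}. Let χ_{ij} : ℝ → ℝ be any functions satisfying χ_{ij}(z) = 0 whenever |z| ≤ τ_{ij}, and |χ_{ij}(z) − z| ≤ τ_{ij} for all z. Then for every i, Σ_{j=1}^p |χ_{ij}(s_{ij}) − σ_{ij}| ≤ ς^{1−q} (Cθ₁ + M) (M^{−q} + (Cθ₁ + M)^{−q}) · Σ_{j=1}^p |σ_{ij}|^q. In particular, max_i Σ_j |χ_{ij}(s_{ij}) − σ_{ij}| ≤ κ_q ς^{1−q} (Cθ₁ + M)(M^{−q} + (Cθ₁ + M)^{−q}), where κ_q = max_i Σ_j |σ_{ij}|^q. -/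
open Matrix BigOperators

lemma aux_small (q ς A x : ℝ) (hq0 : 0 ≤ q) (hq1 : q ≤ 1) (hς : 0 < ς) (hA : 0 < A)
    (hx : 0 ≤ x) (hxA : x ≤ A * ς) :
    x ≤ ς ^ (1 - q) * A * A ^ (-q) * x ^ q := by
  have key : ς ^ (1 - q) * A * A ^ (-q) = (A * ς) ^ (1 - q) := by
    rw [Real.mul_rpow hA.le hς.le]
    have : A ^ (1 - q) = A * A ^ (-q) := by
      rw [show (1 - q : ℝ) = 1 + (-q) by ring, Real.rpow_add hA, Real.rpow_one]
    rw [this]; ring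
  rw [key]
  rcases eq_or_lt_of_le hx with h0 | h0
  · rcases eq_or_lt_of_le hq0 with hq | hq
    · simp [← hq, ← h0]
      positivity
    · rw [← h0, Real.zero_rpow (ne_of_gt hq), mul_zero]
  · calc x = x ^ (1 - q) * x ^ q := by
          rw [← Real.rpow_add h0]; simp
      _ ≤ (A * ς) ^ (1 - q) * x ^ q := by
          apply mul_le_mul_of_nonneg_right _ (Real.rpow_nonneg hx q)
          exact Real.rpow_le_rpow hx hxA (by linarith)

lemma aux_large (q ς M A e y : ℝ) (hq0 : 0 ≤ q) (hς : 0 < ς) (hM : 0 < M) (hA : 0 < A)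
    (he : e ≤ A * ς) (hy : M * ς ≤ y) :
    e ≤ ς ^ (1 - q) * A * M ^ (-q) * y ^ q := by
  have h1 : (M * ς) ^ q ≤ y ^ q := Real.rpow_le_rpow (by positivity) hy hq0
  have h2 : ς ^ (1 - q) * A * M ^ (-q) * (M * ς) ^ q = A * ς := by
    rw [Real.mul_rpow hM.le hς.le]
    rw [show ς ^ (1 - q) * A * M ^ (-q) * (M ^ q * ς ^ q)
        = A * (M ^ (-q) * M ^ q) * (ς ^ (1 - q) * ς ^ q) by ring,
      ← Real.rpow_add hM, ← Real.rpow_add hς]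
    simp
  calc e ≤ A * ς := he
    _ = ς ^ (1 - q) * A * M ^ (-q) * (M * ς) ^ q := h2.symm
    _ ≤ ς ^ (1 - q) * A * M ^ (-q) * y ^ q := by
        apply mul_le_mul_of_nonneg_left h1; positivity

/-- deterministic core of the adaptive-thresholding bound.
On the event where `|s_{ij} − σ_{ij}| ≤ Mς` and `θ₂ ≤ √θ̂_{ij} ≤ θ₁`, the
entrywise shrinkage `χ_{ij}` with threshold `τ_{ij} = Cς√θ̂_{ij}`, `C = 2M/θ₂`,
satisfies, for every row `i`,
`Σ_j |χ_{ij}(s_{ij}) − σ_{ij}| ≤ ς^{1−q}(Cθ₁+M)(M^{−q}+(Cθ₁+M)^{−q}) Σ_j |σ_{ij}|^q`,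
and in particular the same bound with `κ_q = max_i Σ_j |σ_{ij}|^q`. -/
theorem adaptive_thresholding_row_bound {p : ℕ} (hp : 1 ≤ p)
    (q : ℝ) (hq0 : 0 ≤ q) (hq1 : q ≤ 1)
    (s σ θ : Fin p → Fin p → ℝ)
    (ς M θ₁ θ₂ : ℝ) (hς : 0 < ς) (hM : 0 < M) (hθ₂ : 0 < θ₂) (hθ : θ₂ ≤ θ₁)
    (hclose : ∀ i j, |s i j - σ i j| ≤ M * ς)
    (hθlow : ∀ i j, θ₂ ≤ Real.sqrt (θ i j))
    (hθhigh : ∀ i j, Real.sqrt (θ i j) ≤ θ₁)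
    (C : ℝ) (hC : C = 2 * M / θ₂)
    (τ : Fin p → Fin p → ℝ) (hτ : ∀ i j, τ i j = C * ς * Real.sqrt (θ i j))
    (χ : Fin p → Fin p → ℝ → ℝ)
    (hχ0 : ∀ i j z, |z| ≤ τ i j → χ i j z = 0)
    (hχ1 : ∀ i j z, |χ i j z - z| ≤ τ i j) :
    (∀ i, ∑ j, |χ i j (s i j) - σ i j| ≤
        ς ^ (1 - q) * ((C * θ₁ + M) * (M ^ (-q) + (C * θ₁ + M) ^ (-q))) *
          ∑ j, |σ i j| ^ q) ∧
    (∀ i, ∑ j, |χ i j (s i j) - σ i j| ≤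
        (Finset.univ.sup' (Finset.univ_nonempty_iff.mpr ⟨⟨0, hp⟩⟩)
            fun i' => ∑ j, |σ i' j| ^ q) *
          (ς ^ (1 - q) * ((C * θ₁ + M) * (M ^ (-q) + (C * θ₁ + M) ^ (-q))))) := by
  set A := C * θ₁ + M with hA
  have hC0 : 0 < C := by rw [hC]; positivity
  have hθ₁ : 0 < θ₁ := lt_of_lt_of_le hθ₂ hθ
  have hA0 : 0 < A := by positivity
  -- entrywise bound
  have hentry : ∀ i j, |χ i j (s i j) - σ i j| ≤
      ς ^ (1 - q) * (A * (M ^ (-q) + A ^ (-q))) * |σ i j| ^ q := by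
    intro i j
    have hτlow : 2 * M * ς ≤ τ i j := by
      rw [hτ, hC]
      have := hθlow i j
      calc 2 * M * ς = 2 * M / θ₂ * ς * θ₂ := by field_simp
        _ ≤ 2 * M / θ₂ * ς * Real.sqrt (θ i j) := by
            apply mul_le_mul_of_nonneg_left this; positivity
    have hτhigh : τ i j ≤ C * ς * θ₁ := by
      rw [hτ]
      exact mul_le_mul_of_nonneg_left (hθhigh i j) (by positivity)
    have hτ0 : 0 < τ i j := lt_of_lt_of_le (by positivity) hτlow
    have hrw : ς ^ (1 - q) * (A * (M ^ (-q) + A ^ (-q))) * |σ i j| ^ q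
        = ς ^ (1 - q) * A * M ^ (-q) * |σ i j| ^ q
          + ς ^ (1 - q) * A * A ^ (-q) * |σ i j| ^ q := by ring
    rw [hrw]
    by_cases hcase : |s i j| ≤ τ i j
    · -- small case: χ = 0
      rw [hχ0 i j _ hcase]
      have hb : |0 - σ i j| ≤ A * ς := by
        rw [zero_sub, abs_neg]
        calc |σ i j| ≤ |s i j - σ i j| + |s i j| := by
              have := abs_sub_abs_le_abs_sub (σ i j) (s i j)
              have h2 := abs_sub_comm (σ i j) (s i j)
              linarith [abs_nonneg (s i j - σ i j), le_abs_self (σ i j),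
                abs_sub_abs_le_abs_sub (σ i j) (s i j)]
          _ ≤ M * ς + C * ς * θ₁ :=
              add_le_add (hclose i j) (le_trans hcase hτhigh)
          _ = A * ς := by rw [hA]; ring
      have := aux_small q ς A |σ i j| hq0 hq1 hς hA0 (abs_nonneg _)
        (by rw [zero_sub, abs_neg] at hb; exact hb)
      have hnn : 0 ≤ ς ^ (1 - q) * A * M ^ (-q) * |σ i j| ^ q := by positivity
      rw [zero_sub, abs_neg]
      linarith
    · -- large case
      push_neg at hcase
      have he : |χ i j (s i j) - σ i j| ≤ A * ς := by
        calc |χ i j (s i j) - σ i j|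
            ≤ |χ i j (s i j) - s i j| + |s i j - σ i j| := by
              have := abs_sub_le (χ i j (s i j)) (s i j) (σ i j); linarith
          _ ≤ τ i j + M * ς := add_le_add (hχ1 i j _) (hclose i j)
          _ ≤ C * ς * θ₁ + M * ς := by linarith
          _ = A * ς := by rw [hA]; ring
      have hy : M * ς ≤ |σ i j| := by
        have h1 : |s i j| - |σ i j| ≤ |s i j - σ i j| := abs_sub_abs_le_abs_sub _ _
        have := hclose i j
        nlinarith [hτlow, hcase]
      have := aux_large q ς M A (|χ i j (s i j) - σ i j|) (|σ i j|) hq0 hς hM hA0 he hy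
      have hnn : 0 ≤ ς ^ (1 - q) * A * A ^ (-q) * |σ i j| ^ q := by positivity
      linarith
  have hrow : ∀ i, ∑ j, |χ i j (s i j) - σ i j| ≤
      ς ^ (1 - q) * (A * (M ^ (-q) + A ^ (-q))) * ∑ j, |σ i j| ^ q := by
    intro i
    rw [Finset.mul_sum]
    exact Finset.sum_le_sum fun j _ => hentry i j
  refine ⟨hrow, fun i => ?_⟩
  have hsup : ∑ j, |σ i j| ^ q ≤
      Finset.univ.sup' (Finset.univ_nonempty_iff.mpr ⟨⟨0, hp⟩⟩)
        fun i' => ∑ j, |σ i' j| ^ q := by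
    exact Finset.le_sup' (fun i' => ∑ j, |σ i' j| ^ q) (Finset.mem_univ i)
  have hconst : 0 ≤ ς ^ (1 - q) * (A * (M ^ (-q) + A ^ (-q))) := by positivity
  calc ∑ j, |χ i j (s i j) - σ i j|
      ≤ ς ^ (1 - q) * (A * (M ^ (-q) + A ^ (-q))) * ∑ j, |σ i j| ^ q := hrow i
    _ ≤ ς ^ (1 - q) * (A * (M ^ (-q) + A ^ (-q))) *
        (Finset.univ.sup' (Finset.univ_nonempty_iff.mpr ⟨⟨0, hp⟩⟩)
          fun i' => ∑ j, |σ i' j| ^ q) := mul_le_mul_of_nonneg_left hsup hconst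
    _ = _ := by ring
end

section
/- Let Σ̂_e and Σ_e be real symmetric positive definite p×p matrices, B̂ and B real p×m matrices, and H̃ a real m×m matrix. Set B̃ = BH̃ᵀ, Σ̂_r = B̂B̂ᵀ + Σ̂_e, Σ̃_r = B̃B̃ᵀ + Σ_e, Ω = (I_m + B̂ᵀΣ̂_e⁻¹B̂)⁻¹ and Ω₁ = (I_m + B̃ᵀΣ_e⁻¹B̃)⁻¹ (both inner matrices are invertible). Then, in spectral norm, ‖Σ̂_r⁻¹ − Σ̃_r⁻¹‖ ≤ L₁ + L₂ + L₃ + L₄ + L₅ + L₆, where L₁ = ‖Σ̂_e⁻¹ − Σ_e⁻¹‖, L₂ = ‖(Σ̂_e⁻¹ − Σ_e⁻¹)B̂ΩB̂ᵀΣ̂_e⁻¹‖, L₃ = ‖(Σ̂_e⁻¹ − Σ_e⁻¹)B̂ΩB̂ᵀΣ_e⁻¹‖, L₄ = ‖Σ_e⁻¹(B̂ − B̃)ΩB̂ᵀΣ_e⁻¹‖, L₅ = ‖Σ_e⁻¹(B̂ − B̃)ΩH̃BᵀΣ_e⁻¹‖, and L₆ = ‖Σ_e⁻¹BH̃ᵀ(Ω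 − Ω₁)H̃BᵀΣ_e⁻¹‖. -/
open Matrix BigOperators
open scoped Matrix.Norms.L2Operator

/-- The spectral norm `‖A‖ = λ_max^{1/2}(AᵀA)` of a real matrix, realized as the
operator norm of the induced linear map between Euclidean spaces. -/
noncomputable def specNorm {p q : ℕ} (A : Matrix (Fin p) (Fin q) ℝ) : ℝ :=
  ‖LinearMap.toContinuousLinearMap (Matrix.toEuclideanLin A)‖

lemma specNorm_eq_norm {p q : ℕ} (A : Matrix (Fin p) (Fin q) ℝ) : specNorm A = ‖A‖ := rfl

lemma specNorm_transpose {p q : ℕ} (A : Matrix (Fin p) (Fin q) ℝ) :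
    specNorm Aᵀ = specNorm A := by
  rw [specNorm_eq_norm, specNorm_eq_norm, ← Matrix.conjTranspose_eq_transpose_of_trivial,
    Matrix.l2_opNorm_conjTranspose]

lemma specNorm_sub_le {p q : ℕ} (A B : Matrix (Fin p) (Fin q) ℝ) :
    specNorm (A - B) ≤ specNorm A + specNorm B := by
  rw [specNorm_eq_norm, specNorm_eq_norm, specNorm_eq_norm]
  exact norm_sub_le _ _

lemma specNorm_six_sub_le {p : ℕ} (a b c d e f : Matrix (Fin p) (Fin p) ℝ) :
    specNorm (a - b - c - d - e - f) ≤
      specNorm a + specNorm b + specNorm c + specNorm d + specNorm e + specNorm f := by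
  calc specNorm (a - b - c - d - e - f)
      ≤ specNorm (a - b - c - d - e) + specNorm f := specNorm_sub_le _ _
    _ ≤ (specNorm (a - b - c - d) + specNorm e) + specNorm f := by
        gcongr; exact specNorm_sub_le _ _
    _ ≤ ((specNorm (a - b - c) + specNorm d) + specNorm e) + specNorm f := by
        gcongr; exact specNorm_sub_le _ _
    _ ≤ (((specNorm (a - b) + specNorm c) + specNorm d) + specNorm e) + specNorm f := by
        gcongr; exact specNorm_sub_le _ _
    _ ≤ ((((specNorm a + specNorm b) + specNorm c) + specNorm d) + specNorm e) + specNorm f := by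
        gcongr; exact specNorm_sub_le _ _

/-- six-term decomposition in the proof of Theorem 2: with
`B̃ = BH̃ᵀ`, `Σ̂_r = B̂B̂ᵀ + Σ̂_e`, `Σ̃_r = B̃B̃ᵀ + Σ_e`,
`Ω = (I + B̂ᵀΣ̂_e⁻¹B̂)⁻¹`, `Ω₁ = (I + B̃ᵀΣ_e⁻¹B̃)⁻¹` (both inner matrices are
invertible), one has `‖Σ̂_r⁻¹ − Σ̃_r⁻¹‖ ≤ L₁ + L₂ + L₃ + L₄ + L₅ + L₆`. -/
theorem six_term_inverse_decomposition {p m : ℕ}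
    (Sehat Se : Matrix (Fin p) (Fin p) ℝ) (hSehat : Sehat.PosDef) (hSe : Se.PosDef)
    (Bhat B : Matrix (Fin p) (Fin m) ℝ) (Htil : Matrix (Fin m) (Fin m) ℝ)
    (Btil : Matrix (Fin p) (Fin m) ℝ) (hBtil : Btil = B * Htilᵀ)
    (Srhat : Matrix (Fin p) (Fin p) ℝ) (hSrhat : Srhat = Bhat * Bhatᵀ + Sehat)
    (Srtil : Matrix (Fin p) (Fin p) ℝ) (hSrtil : Srtil = Btil * Btilᵀ + Se)
    (Ω Ω₁ : Matrix (Fin m) (Fin m) ℝ)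
    (hΩ : Ω = (1 + Bhatᵀ * Sehat⁻¹ * Bhat)⁻¹)
    (hΩ₁ : Ω₁ = (1 + Btilᵀ * Se⁻¹ * Btil)⁻¹) :
    IsUnit (1 + Bhatᵀ * Sehat⁻¹ * Bhat) ∧
    IsUnit (1 + Btilᵀ * Se⁻¹ * Btil) ∧
    specNorm (Srhat⁻¹ - Srtil⁻¹) ≤
      specNorm (Sehat⁻¹ - Se⁻¹)
      + specNorm ((Sehat⁻¹ - Se⁻¹) * Bhat * Ω * Bhatᵀ * Sehat⁻¹)
      + specNorm ((Sehat⁻¹ - Se⁻¹) * Bhat * Ω * Bhatᵀ * Se⁻¹)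
      + specNorm (Se⁻¹ * (Bhat - Btil) * Ω * Bhatᵀ * Se⁻¹)
      + specNorm (Se⁻¹ * (Bhat - Btil) * Ω * Htil * Bᵀ * Se⁻¹)
      + specNorm (Se⁻¹ * B * Htilᵀ * (Ω - Ω₁) * Htil * Bᵀ * Se⁻¹) := by
  -- invertibility of the two inner matrices
  have hpsd1 : (Bhatᵀ * Sehat⁻¹ * Bhat).PosSemidef := by
    have := (hSehat.inv.posSemidef).conjTranspose_mul_mul_same Bhat
    simpa [Matrix.conjTranspose_eq_transpose_of_trivial] using this
  have hpsd2 : (Btilᵀ * Se⁻¹ * Btil).PosSemidef := by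
    have := (hSe.inv.posSemidef).conjTranspose_mul_mul_same Btil
    simpa [Matrix.conjTranspose_eq_transpose_of_trivial] using this
  have hU1 : IsUnit (1 + Bhatᵀ * Sehat⁻¹ * Bhat) :=
    (Matrix.PosDef.add_posSemidef Matrix.PosDef.one hpsd1).isUnit
  have hU2 : IsUnit (1 + Btilᵀ * Se⁻¹ * Btil) :=
    (Matrix.PosDef.add_posSemidef Matrix.PosDef.one hpsd2).isUnit
  refine ⟨hU1, hU2, ?_⟩
  -- Woodbury for both inverses
  have hWhat : Srhat⁻¹ = Sehat⁻¹ - Sehat⁻¹ * Bhat * Ω * Bhatᵀ * Sehat⁻¹ := by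
    have h := Matrix.add_mul_mul_inv_eq_sub Sehat Bhat 1 Bhatᵀ hSehat.isUnit isUnit_one
      (by simpa using hU1)
    rw [Matrix.mul_one, inv_one] at h
    rw [hSrhat, add_comm, h, hΩ]
  have hWtil : Srtil⁻¹ = Se⁻¹ - Se⁻¹ * Btil * Ω₁ * Btilᵀ * Se⁻¹ := by
    have h := Matrix.add_mul_mul_inv_eq_sub Se Btil 1 Btilᵀ hSe.isUnit isUnit_one
      (by simpa using hU2)
    rw [Matrix.mul_one, inv_one] at h
    rw [hSrtil, add_comm, h, hΩ₁]
  -- symmetry facts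
  have hSehatT : (Sehat⁻¹)ᵀ = Sehat⁻¹ := by
    rw [Matrix.transpose_nonsing_inv]
    congr 1
    simpa [Matrix.conjTranspose_eq_transpose_of_trivial] using hSehat.isHermitian.eq
  have hSeT : (Se⁻¹)ᵀ = Se⁻¹ := by
    rw [Matrix.transpose_nonsing_inv]
    congr 1
    simpa [Matrix.conjTranspose_eq_transpose_of_trivial] using hSe.isHermitian.eq
  have hΩT : Ωᵀ = Ω := by
    rw [hΩ, Matrix.transpose_nonsing_inv]
    congr 1
    simp [Matrix.transpose_add, Matrix.transpose_mul, hSehatT, Matrix.mul_assoc]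
  -- the exact six-term algebraic identity
  have key : Srhat⁻¹ - Srtil⁻¹ =
      (Sehat⁻¹ - Se⁻¹)
      - (Sehat⁻¹ - Se⁻¹) * Bhat * Ω * Bhatᵀ * Sehat⁻¹
      - Se⁻¹ * Bhat * Ω * Bhatᵀ * (Sehat⁻¹ - Se⁻¹)
      - Se⁻¹ * (Bhat - Btil) * Ω * Bhatᵀ * Se⁻¹
      - Se⁻¹ * Btil * Ω * (Bhat - Btil)ᵀ * Se⁻¹
      - Se⁻¹ * Btil * (Ω - Ω₁) * Btilᵀ * Se⁻¹ := by
    rw [hWhat, hWtil]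
    simp only [Matrix.transpose_sub, Matrix.sub_mul, Matrix.mul_sub, sub_mul, mul_sub,
      Matrix.mul_assoc]
    abel
  -- norm identifications for the transposed terms
  have e3 : specNorm (Se⁻¹ * Bhat * Ω * Bhatᵀ * (Sehat⁻¹ - Se⁻¹))
      = specNorm ((Sehat⁻¹ - Se⁻¹) * Bhat * Ω * Bhatᵀ * Se⁻¹) := by
    rw [← specNorm_transpose (Se⁻¹ * Bhat * Ω * Bhatᵀ * (Sehat⁻¹ - Se⁻¹))]
    congr 1
    simp [Matrix.transpose_mul, Matrix.transpose_sub, hΩT, hSeT, hSehatT, Matrix.mul_assoc]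
  have e5 : specNorm (Se⁻¹ * Btil * Ω * (Bhat - Btil)ᵀ * Se⁻¹)
      = specNorm (Se⁻¹ * (Bhat - Btil) * Ω * Htil * Bᵀ * Se⁻¹) := by
    rw [← specNorm_transpose (Se⁻¹ * Btil * Ω * (Bhat - Btil)ᵀ * Se⁻¹)]
    congr 1
    simp [hBtil, Matrix.transpose_mul, Matrix.transpose_sub, hΩT, hSeT, Matrix.mul_assoc]
  have e6 : specNorm (Se⁻¹ * Btil * (Ω - Ω₁) * Btilᵀ * Se⁻¹)
      = specNorm (Se⁻¹ * B * Htilᵀ * (Ω - Ω₁) * Htil * Bᵀ * Se⁻¹) := by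
    congr 1
    simp [hBtil, Matrix.transpose_mul, Matrix.mul_assoc]
  rw [key]
  refine le_trans (specNorm_six_sub_le _ _ _ _ _ _) ?_
  rw [e3, e5, e6]
end
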